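/- (Two-parameter quantum Serre relations) In the algebra f, for all i ≠ j in I, ∑_{p+p'=1-2(i·j)/(i·i)} (-1)^p t_i^{-p(p' - 2⟨i,j⟩/(i·i) + 2⟨j,i⟩/(i·i))} θ_i^{(p)} θ_j θ_i^{(p')} = 0. -/

import Mathlib

/-!
STATEMENT 12 (two-parameter quantum Serre relations): In the algebra f
(the quotient of the free twisted bialgebra 'f by the radical 𝔍 of the
bilinear form), for all i ≠ j in I,
∑_{p+p'=1-2(i·j)/(i·i)} (-1)^p t_i^{-p(p' - 2⟨i,j⟩/(i·i) + 2⟨j,i⟩/(i·i))}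
  θ_i^{(p)} θ_j θ_i^{(p')} = 0.

We model 'f concretely (finitely supported functions on words), and express
the vanishing in f by asserting that the Serre element lies in the radical of
the bilinear form, i.e. pairs to zero with every element.  Here ⟨i,j⟩ = C i j,
i·j = C i j + C j i, i·i = 2 C i i, t_i = t^{C i i}, and the exponent of t_i is
written with the integer t-exponent -C i i·p·p' + p(C i j - C j i); the
hypothesis C i j + C j i = -N·C i i (N ∈ ℕ) encodes that 2(i·j)/(i·i) = -N is a
nonpositive integer, so that p + p' = N + 1.
-/

noncomputable section

abbrev QVT := FractionRing (MvPolynomial (Fin 2) ℚ)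

def v : QVT := algebraMap (MvPolynomial (Fin 2) ℚ) QVT (MvPolynomial.X 0)

def t : QVT := algebraMap (MvPolynomial (Fin 2) ℚ) QVT (MvPolynomial.X 1)

def qnumVT {K : Type*} [Field K] (v t : K) (n : ℕ) : K :=
  ((v * t) ^ (n : ℤ) - (v * t⁻¹) ^ (-(n : ℤ))) / (v * t - (v * t⁻¹)⁻¹)

def qfacVT {K : Type*} [Field K] (v t : K) (n : ℕ) : K :=
  ∏ j ∈ Finset.range n, qnumVT v t (j + 1)

variable {I : Type*} [Fintype I] [DecidableEq I]

abbrev FF (I : Type*) := FreeMonoid I →₀ QVT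

abbrev GG (I : Type*) := (FreeMonoid I × FreeMonoid I) →₀ QVT

def wt (w : FreeMonoid I) : I →₀ ℕ :=
  (w.toList.map fun i => Finsupp.single i 1).sum

def pairF (C : I → I → ℤ) (a b : I →₀ ℕ) : ℤ :=
  a.sum fun i m => b.sum fun j n => (m : ℤ) * C i j * (n : ℤ)

def dotF (C : I → I → ℤ) (a b : I →₀ ℕ) : ℤ :=
  pairF C a b + pairF C b a

def tw (C : I → I → ℤ) (a b : I →₀ ℕ) : QVT :=
  v ^ (-(dotF C a b)) * t ^ (pairF C a b - pairF C b a)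

def Dmat (C : I → I → ℤ) (i j : I) : ℤ :=
  (if i = j then 2 * C i i else 0) - C i j

def mulF (f g : FF I) : FF I :=
  f.sum fun p c => g.sum fun q d => Finsupp.single (p * q) (c * d)

def powF (f : FF I) : ℕ → FF I
  | 0 => Finsupp.single 1 1
  | n + 1 => mulF f (powF f n)

def θ (i : I) : FF I := Finsupp.single (FreeMonoid.of i) 1

/-- The divided power θ_i^{(n)}, with v_i = v^{C i i}, t_i = t^{C i i}. -/
def dpow (C : I → I → ℤ) (i : I) (n : ℕ) : FF I :=
  (qfacVT (v ^ (C i i)) (t ^ (C i i)) n)⁻¹ • powF (θ i) n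

def mulG (C : I → I → ℤ) (f g : GG I) : GG I :=
  f.sum fun p c => g.sum fun q d =>
    Finsupp.single (p.1 * q.1, p.2 * q.2) (tw C (wt q.1) (wt p.2) * (c * d))

def rW (C : I → I → ℤ) : List I → GG I
  | [] => Finsupp.single (1, 1) 1
  | i :: w =>
      mulG C
        (Finsupp.single (FreeMonoid.of i, 1) 1 + Finsupp.single (1, FreeMonoid.of i) 1)
        (rW C w)

def rF (C : I → I → ℤ) (f : FF I) : GG I :=
  f.sum fun p c => c • rW C p.toList

def tens (f g : FF I) : GG I :=
  f.sum fun p c => g.sum fun q d => Finsupp.single (p, q) (c * d)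

def B2 (C : I → I → ℤ) (B : FF I →ₗ[QVT] FF I →ₗ[QVT] QVT) (g h : GG I) : QVT :=
  g.sum fun p c => h.sum fun q d =>
    c * d * t ^ (2 * pairF (Dmat C) (wt p.1) (wt p.2))
      * B (Finsupp.single p.1 1) (Finsupp.single q.1 1)
      * B (Finsupp.single p.2 1) (Finsupp.single q.2 1)

/-- The two-parameter quantum Serre element
S_{ij} = ∑_{p+p'=N+1} (-1)^p t_i^{-p(p'-a'+a'')} θ_i^{(p)} θ_j θ_i^{(p')},
where a' = -2⟨i,j⟩/(i·i), a'' = -2⟨j,i⟩/(i·i), N = a'+a''; the coefficient is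
t_i^{-p(p'-a'+a'')} = t^{-C i i·p·p' + p(C i j - C j i)}. -/
def serre (C : I → I → ℤ) (i j : I) (N : ℕ) : FF I :=
  ∑ p ∈ Finset.range (N + 2),
    ((-1 : QVT) ^ p
        * t ^ (-(C i i) * p * ((N + 1 - p : ℕ) : ℤ) + p * (C i j - C j i))) •
      mulF (dpow C i p) (mulF (θ j) (dpow C i (N + 1 - p)))


/-!
The Serre element `S` pairs to zero with every word. Against the empty word the pairing reads off
the constant coefficient of `S`, which is zero. Against a word `θ_k w`, compatibility of `B` with
the twisted coproduct makes `B(x, θ_k w)` equal to `B(θ_k, θ_k)` times a pairing of `r_k x` with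
`w`, where `r_k` is Lusztig's skew derivation; so it suffices that `r_k S = 0` for every `k`.
For `k ∉ {i, j}` this is clear. All terms of `r_j S` are multiples of `θ_i^{N+1}`, and their
coefficients sum to the `q`-binomial expansion, in `x = v_i^{-2}`, of `∏_{m ≤ N} (1 - x^{m-N})`,
whose factor `m = N` vanishes. The terms of `r_i S` cancel in pairs, two on each word
`θ_i^a θ_j θ_i^b`.
-/

open Finset
open FreeMonoid (of ofList)
open Finsupp (single linearCombination)

lemma add_choose_two (a b : ℕ) : (a + b).choose 2 = a.choose 2 + b.choose 2 + a * b := by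
  induction b with
  | zero => simp
  | succ b ih =>
    rw [← add_assoc, Nat.choose_succ_succ', ih, Nat.choose_succ_succ']
    simp only [Nat.choose_one_right]
    ring

lemma two_mul_choose_two_add_self (p : ℕ) : 2 * p.choose 2 + p = p * p := by
  induction p with
  | zero => rfl
  | succ p ih => rw [Nat.choose_succ_succ', Nat.choose_one_right]; linarith

section QArith

variable {R : Type*} [CommRing R]

def qint (x : R) (n : ℕ) : R := ∑ m ∈ range n, x ^ m

def qfact (x : R) (n : ℕ) : R := ∏ m ∈ range n, qint x (m + 1)

def qbinom (x : R) : ℕ → ℕ → R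
  | _, 0 => 1
  | 0, _ + 1 => 0
  | n + 1, k + 1 => qbinom x n k + x ^ (k + 1) * qbinom x n (k + 1)

variable (x : R)

@[simp] lemma qint_zero : qint x 0 = 0 := sum_range_zero _

lemma qint_succ (n : ℕ) : qint x (n + 1) = 1 + x * qint x n := by
  rw [qint, qint, geom_sum_succ, add_comm]

lemma qint_add (a b : ℕ) : qint x (a + b) = qint x a + x ^ a * qint x b := by
  simp only [qint, sum_range_add, pow_add, mul_sum]

lemma qint_ne_zero {x : R} {n : ℕ} (h : x ^ n ≠ 1) : qint x n ≠ 0 := by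
  intro h0
  have hgeom := geom_sum_mul x n
  rw [← qint, h0, zero_mul, eq_comm, sub_eq_zero] at hgeom
  exact h hgeom

@[simp] lemma qfact_zero : qfact x 0 = 1 := prod_range_zero _

lemma qfact_succ (n : ℕ) : qfact x (n + 1) = qfact x n * qint x (n + 1) :=
  prod_range_succ _ _

@[simp] lemma qbinom_zero_right (n : ℕ) : qbinom x n 0 = 1 := by cases n <;> rfl

lemma qbinom_succ_succ (n k : ℕ) :
    qbinom x (n + 1) (k + 1) = qbinom x n k + x ^ (k + 1) * qbinom x n (k + 1) := rfl

lemma qbinom_eq_zero_of_lt : ∀ {n k : ℕ}, n < k → qbinom x n k = 0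
  | 0, _ + 1, _ => rfl
  | n + 1, k + 1, h => by
    rw [qbinom_succ_succ, qbinom_eq_zero_of_lt (by omega), qbinom_eq_zero_of_lt (by omega),
      mul_zero, add_zero]

@[simp] lemma qbinom_self (n : ℕ) : qbinom x n n = 1 := by
  induction n with
  | zero => rfl
  | succ n ih =>
    rw [qbinom_succ_succ, ih, qbinom_eq_zero_of_lt x n.lt_succ_self, mul_zero, add_zero]

lemma qbinom_add_mul_qfact_mul_qfact :
    ∀ a b : ℕ, qbinom x (a + b) a * (qfact x a * qfact x b) = qfact x (a + b)
  | 0, b => by simp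
  | a + 1, 0 => by simp
  | a + 1, b + 1 => by
    have h₁ := qbinom_add_mul_qfact_mul_qfact a (b + 1)
    have h₂ := qbinom_add_mul_qfact_mul_qfact (a + 1) b
    have hsplit : qint x (a + (b + 1) + 1) = qint x (a + 1) + x ^ (a + 1) * qint x (b + 1) := by
      rw [← qint_add]; congr 1; omega
    rw [show a + 1 + b = a + (b + 1) by omega, qfact_succ x a] at h₂
    rw [qfact_succ x b] at h₁
    rw [show a + 1 + (b + 1) = a + (b + 1) + 1 by omega, qbinom_succ_succ, qfact_succ x a,
      qfact_succ x b, qfact_succ x (a + (b + 1)), hsplit]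
    linear_combination qint x (a + 1) * h₁ + x ^ (a + 1) * qint x (b + 1) * h₂

/-- The `q`-binomial theorem. -/
theorem sum_qbinom_mul_pow (M : ℕ) (z : R) :
    ∑ p ∈ range (M + 1), (-1) ^ p * x ^ p.choose 2 * qbinom x M p * z ^ p
      = ∏ k ∈ range M, (1 - z * x ^ k) := by
  induction M generalizing z with
  | zero => simp
  | succ M ih =>
    have pascal : ∀ p ∈ range (M + 1),
        (-1) ^ (p + 1) * x ^ (p + 1).choose 2 * qbinom x (M + 1) (p + 1) * z ^ (p + 1)
          = -z * ((-1) ^ p * x ^ p.choose 2 * qbinom x M p * (z * x) ^ p)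
            + (-1) ^ (p + 1) * x ^ (p + 1).choose 2 * qbinom x M (p + 1) * (z * x) ^ (p + 1) := by
      intro p _
      rw [qbinom_succ_succ, Nat.choose_succ_succ', Nat.choose_one_right]
      ring
    have shifted :=
      sum_range_succ' (fun p => (-1) ^ p * x ^ p.choose 2 * qbinom x M p * (z * x) ^ p) (M + 1)
    rw [sum_range_succ, qbinom_eq_zero_of_lt x M.lt_succ_self, ih] at shifted
    have hprod : ∏ k ∈ range M, (1 - z * x ^ (k + 1)) = ∏ k ∈ range M, (1 - z * x * x ^ k) :=
      prod_congr rfl fun k _ => by ring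
    rw [sum_range_succ', sum_congr rfl pascal, sum_add_distrib, ← mul_sum, ih, prod_range_succ',
      hprod, eq_sub_of_add_eq shifted.symm]
    simp only [pow_zero, Nat.choose_zero_succ, qbinom_zero_right, mul_zero, zero_mul, add_zero,
      mul_one]
    ring

end QArith

section TwoParameter

variable {K : Type*} [Field K] {u s : K}

lemma mul_self_ne_one (hroot : ∀ n ≠ 0, u ^ n ≠ 1) : u * u ≠ 1 := by
  simpa [sq] using hroot 2 two_ne_zero

lemma inv_mul_self_pow_ne_one (hroot : ∀ n ≠ 0, u ^ n ≠ 1) {n : ℕ} (hn : n ≠ 0) :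
    (u * u)⁻¹ ^ n ≠ 1 := by
  rw [inv_pow, inv_ne_one, ← sq, ← pow_mul]
  exact hroot _ (by omega)

lemma qnumVT_succ (hu : u ≠ 0) (hs : s ≠ 0) (huu : u * u ≠ 1) (n : ℕ) :
    qnumVT u s (n + 1) = (u * s) ^ n * qint (u * u)⁻¹ (n + 1) := by
  set x := (u * u)⁻¹
  have hgeom : qint x (n + 1) * (x - 1) = x ^ (n + 1) - 1 := geom_sum_mul x (n + 1)
  have hback : (u * s⁻¹)⁻¹ = u * s * x := by simp only [x]; field_simp
  have hden : u * s - u * s * x ≠ 0 := by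
    rw [← mul_one_sub]
    exact mul_ne_zero (mul_ne_zero hu hs) (sub_ne_zero.mpr (inv_ne_one.mpr huu).symm)
  rw [qnumVT, zpow_neg, ← inv_zpow, hback, zpow_natCast, zpow_natCast, div_eq_iff hden, mul_pow]
  linear_combination (u * s) ^ (n + 1) * hgeom

lemma qfacVT_succ (hu : u ≠ 0) (hs : s ≠ 0) (huu : u * u ≠ 1) (n : ℕ) :
    qfacVT u s (n + 1) = qfacVT u s n * ((u * s) ^ n * qint (u * u)⁻¹ (n + 1)) := by
  rw [qfacVT, prod_range_succ, qnumVT_succ hu hs huu, qfacVT]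

lemma qfacVT_eq (hu : u ≠ 0) (hs : s ≠ 0) (huu : u * u ≠ 1) (n : ℕ) :
    qfacVT u s n = (u * s) ^ n.choose 2 * qfact (u * u)⁻¹ n := by
  induction n with
  | zero => simp [qfacVT]
  | succ n ih =>
    rw [qfacVT_succ hu hs huu, ih, qfact_succ, Nat.choose_succ_succ', Nat.choose_one_right]
    ring

lemma qfacVT_ne_zero (hu : u ≠ 0) (hs : s ≠ 0) (hroot : ∀ n ≠ 0, u ^ n ≠ 1) (n : ℕ) :
    qfacVT u s n ≠ 0 := by
  rw [qfacVT_eq hu hs (mul_self_ne_one hroot)]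
  exact mul_ne_zero (pow_ne_zero _ (mul_ne_zero hu hs)) <| prod_ne_zero_iff.mpr fun m _ =>
    qint_ne_zero (inv_mul_self_pow_ne_one hroot m.succ_ne_zero)

/-- The coefficient of `θ_i^p θ_j θ_i^q` in the Serre element, for `u = v_i`, `s = t_i` and
`T = t^(⟨i,j⟩ - ⟨j,i⟩)`. -/
def serreCoeff (u s T : K) (p q : ℕ) : K :=
  (-1) ^ p * T ^ p / (s ^ (p * q) * qfacVT u s p * qfacVT u s q)

lemma serreCoeff_succ_left_add (hu : u ≠ 0) (hs : s ≠ 0) (hroot : ∀ n ≠ 0, u ^ n ≠ 1) (T : K)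
    (a b : ℕ) :
    serreCoeff u s T (a + 1) b * qint (u * u)⁻¹ (a + 1)
      + serreCoeff u s T a (b + 1) * ((u * u)⁻¹ ^ a * (u ^ (a + b) * T) * qint (u * u)⁻¹ (b + 1))
      = 0 := by
  have hshift : (u * u)⁻¹ ^ a * (u ^ (a + b) * T) = u ^ b * T / u ^ a := by
    rw [inv_pow, mul_pow, pow_add]
    field_simp
  have hFa := qfacVT_ne_zero hu hs hroot a
  have hFb := qfacVT_ne_zero hu hs hroot b
  simp only [serreCoeff, qfacVT_succ hu hs (mul_self_ne_one hroot), hshift]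
  set x := (u * u)⁻¹
  have hQa : qint x (a + 1) ≠ 0 := qint_ne_zero (inv_mul_self_pow_ne_one hroot a.succ_ne_zero)
  have hQb : qint x (b + 1) ≠ 0 := qint_ne_zero (inv_mul_self_pow_ne_one hroot b.succ_ne_zero)
  field_simp
  ring

lemma sum_serreCoeff_mul_pow (hu : u ≠ 0) (hs : s ≠ 0) (hroot : ∀ n ≠ 0, u ^ n ≠ 1) {T : K}
    (hT : T ≠ 0) (N : ℕ) :
    ∑ pq ∈ antidiagonal (N + 1), serreCoeff u s T pq.1 pq.2 * (u ^ N * T⁻¹) ^ pq.1 = 0 := by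
  -- `x` is kept opaque, so that `field_simp` leaves the arguments of `qfact` and `qbinom` alone.
  obtain ⟨x, hx⟩ : ∃ x, x = (u * u)⁻¹ := ⟨_, rfl⟩
  have hQ : ∀ n, qfact x n ≠ 0 := fun n => prod_ne_zero_iff.mpr fun m _ =>
    qint_ne_zero (hx ▸ inv_mul_self_pow_ne_one hroot m.succ_ne_zero)
  have term : ∀ pq ∈ antidiagonal (N + 1), serreCoeff u s T pq.1 pq.2 * (u ^ N * T⁻¹) ^ pq.1
      = ((u * s) ^ (N + 1).choose 2 * qfact x (N + 1))⁻¹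
        * ((-1) ^ pq.1 * x ^ pq.1.choose 2 * qbinom x (N + 1) pq.1 * ((u * u) ^ N) ^ pq.1) := by
    rintro ⟨p, q⟩ h
    rw [HasAntidiagonal.mem_antidiagonal] at h
    have hexp : p * q + 2 * p.choose 2 = N * p := by
      have := two_mul_choose_two_add_self p
      have : (p + q) * p = (N + 1) * p := by rw [h]
      linarith
    have hz : x ^ p.choose 2 * ((u * u) ^ N) ^ p = u ^ (N * p) * u ^ (p * q) := by
      rw [hx, inv_pow, ← pow_mul, ← hexp,
        inv_mul_eq_iff_eq_mul₀ (pow_ne_zero _ (mul_ne_zero hu hu))]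
      ring
    have hb := qbinom_add_mul_qfact_mul_qfact x p q
    have hbne : qbinom x (p + q) p ≠ 0 := left_ne_zero_of_mul (hb ▸ hQ (p + q))
    have hQp := hQ p
    have hQq := hQ q
    rw [show (-1) ^ p * x ^ p.choose 2 * qbinom x (N + 1) p * ((u * u) ^ N) ^ p
        = (-1) ^ p * qbinom x (N + 1) p * (x ^ p.choose 2 * ((u * u) ^ N) ^ p) by ring, hz]
    simp only [serreCoeff, qfacVT_eq hu hs (mul_self_ne_one hroot), ← hx, ← h, add_choose_two,
      ← hb, mul_pow (u ^ N), inv_pow, ← pow_mul]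
    field_simp
    ring
  rw [sum_congr rfl term, ← mul_sum, Nat.sum_antidiagonal_eq_sum_range_succ_mk,
    sum_qbinom_mul_pow, prod_eq_zero (mem_range.mpr N.lt_succ_self), mul_zero]
  rw [hx, inv_pow, mul_inv_cancel₀ (pow_ne_zero _ (mul_ne_zero hu hu)), sub_self]

end TwoParameter

lemma v_pow_ne_one {k : ℕ} (hk : k ≠ 0) : v ^ k ≠ 1 := by
  rw [v, ← map_pow, ← map_one (algebraMap (MvPolynomial (Fin 2) ℚ) QVT),
    (IsFractionRing.injective _ QVT).ne_iff]
  intro h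
  simpa [hk] using congrArg MvPolynomial.constantCoeff h

lemma v_ne_zero : v ≠ 0 :=
  (map_ne_zero_iff _ (IsFractionRing.injective _ QVT)).mpr (MvPolynomial.X_ne_zero _)

lemma t_ne_zero : t ≠ 0 :=
  (map_ne_zero_iff _ (IsFractionRing.injective _ QVT)).mpr (MvPolynomial.X_ne_zero _)

lemma v_zpow_pow_ne_one {c : ℤ} (hc : c ≠ 0) {n : ℕ} (hn : n ≠ 0) : (v ^ c) ^ n ≠ 1 := by
  rw [← zpow_natCast, ← zpow_mul]
  rcases Int.natAbs_eq (c * n) with h | h <;> rw [h]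
  · rw [zpow_natCast]
    exact v_pow_ne_one (by simp [hc, hn])
  · rw [zpow_neg, zpow_natCast, inv_ne_one]
    exact v_pow_ne_one (by simp [hc, hn])

lemma linearCombination_sum_single {R α β : Type*} [CommSemiring R] (f : β → R) (g : α →₀ R)
    (φ : α → β) (c : α → R) :
    linearCombination R f (g.sum fun q d => single (φ q) (c q * d))
      = linearCombination R (fun q => c q * f (φ q)) g := by
  rw [map_finsuppSum]
  simp only [Finsupp.linearCombination_single, smul_eq_mul]
  rw [Finsupp.linearCombination_apply]
  exact Finsupp.sum_congr fun q _ => by ring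

lemma linearCombination_const_mul {R α : Type*} [CommSemiring R] (c : R) (f : α → R)
    (g : α →₀ R) : linearCombination R (fun a => c * f a) g = c * linearCombination R f g := by
  simp only [Finsupp.linearCombination_apply, smul_eq_mul, Finsupp.mul_sum]
  exact Finsupp.sum_congr fun _ _ => by ring

lemma of_mul_ne_one {α : Type*} (m : α) (x : FreeMonoid α) : of m * x ≠ 1 := by
  rw [Ne, ← FreeMonoid.toList.injective.eq_iff]
  simp

lemma of_mul_eq_of_iff {α : Type*} {m k : α} {x : FreeMonoid α} :
    of m * x = of k ↔ m = k ∧ x = 1 := by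
  rw [← FreeMonoid.toList.injective.eq_iff, ← FreeMonoid.toList.injective.eq_iff (b := 1)]
  simp

section Words

variable {I : Type*}

lemma mulF_single_single (u w : FreeMonoid I) (b d : QVT) :
    mulF (single u b) (single w d) = single (u * w) (b * d) := by
  rw [mulF, Finsupp.sum_single_index (by simp), Finsupp.sum_single_index (by simp)]

lemma powF_θ (i : I) (n : ℕ) : powF (θ i) n = single (ofList (List.replicate n i)) 1 := by
  induction n with
  | zero => rfl
  | succ n ih => rw [powF, ih, θ, mulF_single_single, one_mul]; rfl

lemma dpow_eq_single (C : I → I → ℤ) (i : I) (n : ℕ) :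
    dpow C i n = single (ofList (List.replicate n i)) (qfacVT (v ^ C i i) (t ^ C i i) n)⁻¹ := by
  rw [dpow, powF_θ, Finsupp.smul_single, smul_eq_mul, mul_one]

def serreWord (i j : I) (p q : ℕ) : List I := List.replicate p i ++ j :: List.replicate q i

lemma of_mul_serreWord (i j : I) (p q : ℕ) :
    of i * ofList (serreWord i j p q) = ofList (serreWord i j (p + 1) q) := rfl

lemma serre_eq_sum_single (C : I → I → ℤ) (i j : I) (N : ℕ) :
    serre C i j N = ∑ pq ∈ antidiagonal (N + 1), single (ofList (serreWord i j pq.1 pq.2))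
      (serreCoeff (v ^ C i i) (t ^ C i i) (t ^ (C i j - C j i)) pq.1 pq.2) := by
  rw [serre, Nat.sum_antidiagonal_eq_sum_range_succ_mk]
  refine sum_congr rfl fun p _ => ?_
  have ht : t ^ (-C i i * p * ((N + 1 - p : ℕ) : ℤ) + p * (C i j - C j i))
      = ((t ^ C i i) ^ (p * (N + 1 - p)))⁻¹ * (t ^ (C i j - C j i)) ^ p := by
    rw [zpow_add₀ t_ne_zero, ← zpow_natCast, ← zpow_natCast, ← zpow_mul, ← zpow_mul, ← zpow_neg]
    push_cast
    ring_nf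
  rw [dpow_eq_single, dpow_eq_single, θ, mulF_single_single, mulF_single_single,
    Finsupp.smul_single, smul_eq_mul, ht, serreCoeff]
  congr 1
  field_simp

lemma serre_apply_one (C : I → I → ℤ) (i j : I) (N : ℕ) : serre C i j N 1 = 0 := by
  rw [serre_eq_sum_single, Finsupp.finsetSum_apply]
  refine sum_eq_zero fun pq _ => Finsupp.single_eq_of_ne ?_
  rw [Ne, eq_comm, ← FreeMonoid.toList.injective.eq_iff]
  simp [serreWord]

@[simp] lemma wt_one : wt (1 : FreeMonoid I) = 0 := rfl

@[simp] lemma wt_of (k : I) : wt (of k) = single k 1 := by simp [wt]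

variable (C : I → I → ℤ)

@[simp] lemma pairF_zero_left (a : I →₀ ℕ) : pairF C 0 a = 0 := by simp [pairF]

@[simp] lemma pairF_zero_right (a : I →₀ ℕ) : pairF C a 0 = 0 := by simp [pairF]

@[simp] lemma tw_zero_left (a : I →₀ ℕ) : tw C 0 a = 1 := by simp [tw, dotF]

@[simp] lemma tw_zero_right (a : I →₀ ℕ) : tw C a 0 = 1 := by simp [tw, dotF]

lemma tw_single_single (a b : I) :
    tw C (single a 1) (single b 1) = v ^ (-(C a b + C b a)) * t ^ (C a b - C b a) := by
  simp [tw, dotF, pairF]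

lemma linearCombination_rW_cons (f : FreeMonoid I × FreeMonoid I → QVT) (m : I) (w : List I) :
    linearCombination QVT f (rW C (m :: w))
      = linearCombination QVT (fun q => f (of m * q.1, q.2)) (rW C w)
        + linearCombination QVT (fun q => tw C (wt q.1) (single m 1) * f (q.1, of m * q.2))
            (rW C w) := by
  rw [rW, mulG, Finsupp.sum_add_index' (fun _ => by simp)
      (fun _ _ _ => by simp only [add_mul, mul_add, Finsupp.single_add, Finsupp.sum_add]),
    Finsupp.sum_single_index (by simp), Finsupp.sum_single_index (by simp)]
  simp only [one_mul, map_add, linearCombination_sum_single]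
  simp only [wt_one, wt_of, tw_zero_right, one_mul]

lemma linearCombination_rW_fst_one (f : FreeMonoid I → QVT) (u : List I) :
    linearCombination QVT (fun q => single q.1 (1 : QVT) 1 * f q.2) (rW C u) = f (ofList u) := by
  induction u generalizing f with
  | nil => simp [rW]
  | cons m w ih =>
    have h₁ : (fun q : FreeMonoid I × FreeMonoid I => single (of m * q.1) (1 : QVT) 1 * f q.2)
        = 0 := by
      funext q
      rw [Finsupp.single_eq_of_ne (of_mul_ne_one m q.1).symm, zero_mul]
      rfl
    have h₂ : (fun q : FreeMonoid I × FreeMonoid I =>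
          tw C (wt q.1) (single m 1) * (single q.1 (1 : QVT) 1 * f (of m * q.2)))
        = fun q => single q.1 (1 : QVT) 1 * f (of m * q.2) := by
      funext q
      by_cases hq : q.1 = 1
      · rw [hq, wt_one, tw_zero_left, one_mul]
      · rw [Finsupp.single_eq_of_ne (Ne.symm hq), zero_mul, mul_zero]
    rw [linearCombination_rW_cons, h₁, h₂, Finsupp.linearCombination_zero, LinearMap.zero_apply,
      zero_add]
    exact ih fun x => f (of m * x)

end Words

section SkewDerivation

variable {I : Type*} [DecidableEq I] (C : I → I → ℤ)

/-- Lusztig's skew derivation `r_k` on a word: it deletes one letter `k`, weighted by the twists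
of `k` with the letters to the left of it. -/
def skewDerivWord (k : I) : List I → FF I
  | [] => 0
  | m :: w => (if m = k then single (ofList w) 1 else 0)
      + tw C (single k 1) (single m 1) • Finsupp.mapDomain (of m * ·) (skewDerivWord k w)

def skewDeriv (k : I) : FF I →ₗ[QVT] FF I :=
  linearCombination QVT fun u => skewDerivWord C k u.toList

lemma skewDerivWord_cons (k m : I) (w : List I) :
    skewDerivWord C k (m :: w) = (if m = k then single (ofList w) 1 else 0)
      + tw C (single k 1) (single m 1) • Finsupp.mapDomain (of m * ·) (skewDerivWord C k w) :=
  rfl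

lemma skewDerivWord_eq_zero_of_not_mem {k : I} : ∀ {w : List I}, k ∉ w → skewDerivWord C k w = 0
  | [], _ => rfl
  | m :: w, h => by
    rw [List.mem_cons, not_or] at h
    rw [skewDerivWord_cons, if_neg (Ne.symm h.1), skewDerivWord_eq_zero_of_not_mem h.2,
      Finsupp.mapDomain_zero, smul_zero, add_zero]

lemma skewDerivWord_replicate (k : I) (n : ℕ) :
    skewDerivWord C k (List.replicate n k)
      = qint (tw C (single k 1) (single k 1)) n • single (ofList (List.replicate (n - 1) k)) 1 := by
  induction n with
  | zero => simp [skewDerivWord]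
  | succ n ih =>
    rw [List.replicate_succ, skewDerivWord_cons, if_pos rfl, ih, Finsupp.mapDomain_smul,
      Finsupp.mapDomain_single, smul_smul, qint_succ]
    rcases n with _ | n
    · simp
    · rw [add_smul, one_smul]
      rfl

lemma skewDerivWord_serreWord_right {i j : I} (hij : i ≠ j) (p q : ℕ) :
    skewDerivWord C j (serreWord i j p q)
      = tw C (single j 1) (single i 1) ^ p • single (ofList (List.replicate (p + q) i)) 1 := by
  induction p with
  | zero =>
    rw [serreWord, List.replicate_zero, List.nil_append, skewDerivWord_cons, if_pos rfl,
      skewDerivWord_eq_zero_of_not_mem C (by simp [Ne.symm hij])]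
    simp
  | succ p ih =>
    rw [serreWord, List.replicate_succ, List.cons_append, skewDerivWord_cons, if_neg hij,
      ← serreWord, ih, Finsupp.mapDomain_smul, Finsupp.mapDomain_single, smul_smul, ← pow_succ',
      zero_add, Nat.succ_add, List.replicate_succ]
    rfl

lemma skewDerivWord_serreWord_left {i j : I} (hij : i ≠ j) (p q : ℕ) :
    skewDerivWord C i (serreWord i j p q)
      = qint (tw C (single i 1) (single i 1)) p • single (ofList (serreWord i j (p - 1) q)) 1
        + (tw C (single i 1) (single i 1) ^ p * tw C (single i 1) (single j 1)
            * qint (tw C (single i 1) (single i 1)) q)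
          • single (ofList (serreWord i j p (q - 1))) 1 := by
  induction p with
  | zero =>
    rw [serreWord, List.replicate_zero, List.nil_append, skewDerivWord_cons, if_neg (Ne.symm hij),
      skewDerivWord_replicate, Finsupp.mapDomain_smul, Finsupp.mapDomain_single, smul_smul]
    simp only [qint_zero, zero_smul, zero_add, pow_zero, one_mul]
    rw [mul_comm]
    rfl
  | succ p ih =>
    rw [serreWord, List.replicate_succ, List.cons_append, skewDerivWord_cons, if_pos rfl,
      ← serreWord, ih]
    simp only [Finsupp.mapDomain_add, Finsupp.mapDomain_smul, Finsupp.mapDomain_single, smul_add,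
      smul_smul, of_mul_serreWord, Nat.add_sub_cancel, qint_succ, add_smul, one_smul]
    rcases p with _ | p
    · simp only [qint_zero, mul_zero, zero_smul, zero_add, add_zero, pow_succ]
      congr 2
      ring
    · simp only [Nat.add_sub_cancel, pow_succ, add_assoc]
      congr 3
      ring

lemma skewDeriv_serre_eq_sum (i j k : I) (N : ℕ) :
    skewDeriv C k (serre C i j N) = ∑ pq ∈ antidiagonal (N + 1),
      serreCoeff (v ^ C i i) (t ^ C i i) (t ^ (C i j - C j i)) pq.1 pq.2
        • skewDerivWord C k (serreWord i j pq.1 pq.2) := by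
  simp only [serre_eq_sum_single, map_sum, skewDeriv, Finsupp.linearCombination_single,
    FreeMonoid.toList_ofList]

lemma skewDeriv_serre_of_ne {i j k : I} (hki : k ≠ i) (hkj : k ≠ j) (N : ℕ) :
    skewDeriv C k (serre C i j N) = 0 := by
  rw [skewDeriv_serre_eq_sum]
  refine sum_eq_zero fun pq _ => ?_
  rw [skewDerivWord_eq_zero_of_not_mem C (by simp [serreWord, List.mem_replicate, hki, hkj]),
    smul_zero]

lemma skewDeriv_serre_right {i j : I} (hc : C i i ≠ 0) (hij : i ≠ j) {N : ℕ}
    (hN : C i j + C j i = -(N : ℤ) * C i i) : skewDeriv C j (serre C i j N) = 0 := by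
  have hτ : tw C (single j 1) (single i 1) = (v ^ C i i) ^ N * (t ^ (C i j - C j i))⁻¹ := by
    rw [tw_single_single, add_comm, hN, ← zpow_neg, neg_sub, ← zpow_natCast, ← zpow_mul]
    ring_nf
  rw [skewDeriv_serre_eq_sum, sum_congr rfl fun pq h => by
    rw [skewDerivWord_serreWord_right C hij, HasAntidiagonal.mem_antidiagonal.mp h, smul_smul]]
  rw [← sum_smul, hτ, sum_serreCoeff_mul_pow (zpow_ne_zero _ v_ne_zero) (zpow_ne_zero _ t_ne_zero)
    (fun n hn => v_zpow_pow_ne_one hc hn) (zpow_ne_zero _ t_ne_zero), zero_smul]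

lemma skewDeriv_serre_left {i j : I} (hc : C i i ≠ 0) (hij : i ≠ j) {N : ℕ}
    (hN : C i j + C j i = -(N : ℤ) * C i i) : skewDeriv C i (serre C i j N) = 0 := by
  have hx : tw C (single i 1) (single i 1) = (v ^ C i i * v ^ C i i)⁻¹ := by
    rw [tw_single_single, sub_self, zpow_zero, mul_one, ← zpow_add₀ v_ne_zero, zpow_neg]
  have hτ : tw C (single i 1) (single j 1) = (v ^ C i i) ^ N * t ^ (C i j - C j i) := by
    rw [tw_single_single, hN, ← zpow_natCast, ← zpow_mul]
    ring_nf
  rw [skewDeriv_serre_eq_sum]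
  simp only [skewDerivWord_serreWord_left C hij, hx, hτ, smul_add, smul_smul, sum_add_distrib]
  rw [Nat.sum_antidiagonal_succ, Nat.sum_antidiagonal_succ']
  simp only [qint_zero, mul_zero, zero_smul, zero_add, Nat.add_sub_cancel, ← sum_add_distrib,
    ← add_smul]
  refine sum_eq_zero fun ab h => ?_
  rw [← HasAntidiagonal.mem_antidiagonal.mp h, serreCoeff_succ_left_add (zpow_ne_zero _ v_ne_zero)
    (zpow_ne_zero _ t_ne_zero) (fun n hn => v_zpow_pow_ne_one hc hn), zero_smul]

lemma skewDeriv_serre {i j : I} (hc : C i i ≠ 0) (hij : i ≠ j) {N : ℕ}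
    (hN : C i j + C j i = -(N : ℤ) * C i i) (k : I) : skewDeriv C k (serre C i j N) = 0 := by
  obtain rfl | hki := eq_or_ne k i
  · exact skewDeriv_serre_left C hc hij hN
  obtain rfl | hkj := eq_or_ne k j
  · exact skewDeriv_serre_right C hc hij hN
  exact skewDeriv_serre_of_ne C hki hkj N

/-- The `θ_k ⊗ _` component of the twisted coproduct of a word `u` is `θ_k ⊗ r_k u`. -/
lemma linearCombination_rW_fst_of (f : FreeMonoid I → QVT) (k : I) (u : List I) :
    linearCombination QVT (fun q => single q.1 (1 : QVT) (of k) * f q.2) (rW C u)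
      = linearCombination QVT f (skewDerivWord C k u) := by
  induction u generalizing f with
  | nil => simp [rW, skewDerivWord, Finsupp.single_eq_of_ne (FreeMonoid.of_ne_one k)]
  | cons m w ih =>
    have h₁ : (fun q : FreeMonoid I × FreeMonoid I => single (of m * q.1) (1 : QVT) (of k) * f q.2)
        = fun q => single q.1 (1 : QVT) 1 * (if m = k then f q.2 else 0) := by
      funext q
      by_cases hmk : m = k
      · classical
        subst hmk
        simp [Finsupp.single_apply, eq_comm]
      · rw [Finsupp.single_eq_of_ne fun h => hmk (of_mul_eq_of_iff.mp h.symm).1, if_neg hmk]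
        simp
    have h₂ : (fun q : FreeMonoid I × FreeMonoid I =>
          tw C (wt q.1) (single m 1) * (single q.1 (1 : QVT) (of k) * f (of m * q.2)))
        = fun q => single q.1 (1 : QVT) (of k)
            * (tw C (single k 1) (single m 1) * f (of m * q.2)) := by
      funext q
      by_cases hq : q.1 = of k
      · rw [hq, wt_of]
        ring
      · simp [Finsupp.single_eq_of_ne (Ne.symm hq)]
    rw [linearCombination_rW_cons, h₁, h₂,
      linearCombination_rW_fst_one C (fun x => if m = k then f x else 0),
      ih fun x => tw C (single k 1) (single m 1) * f (of m * x), skewDerivWord_cons,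
      map_add, map_smul, Finsupp.linearCombination_mapDomain, linearCombination_const_mul,
      smul_eq_mul]
    congr 1
    split_ifs <;> simp

end SkewDerivation

section Pairing

variable {I : Type*} [DecidableEq I] (C : I → I → ℤ) (B : FF I →ₗ[QVT] FF I →ₗ[QVT] QVT)

lemma pairing_single_mul_right
    (hright : ∀ x y' y'' : FF I, B x (mulF y' y'') = B2 C B (rF C x) (tens y' y''))
    (u a b : FreeMonoid I) :
    B (single u 1) (single (a * b) 1)
      = linearCombination QVT (fun q => t ^ (2 * pairF (Dmat C) (wt q.1) (wt q.2))
          * B (single q.1 1) (single a 1) * B (single q.2 1) (single b 1)) (rW C u.toList) := by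
  have h := hright (single u 1) (single a 1) (single b 1)
  rw [mulF_single_single, one_mul] at h
  rw [h, rF, Finsupp.sum_single_index (by simp), one_smul, tens,
    Finsupp.sum_single_index (by simp), Finsupp.sum_single_index (by simp), one_mul, B2,
    Finsupp.linearCombination_apply]
  refine Finsupp.sum_congr fun q _ => ?_
  rw [Finsupp.sum_single_index (by simp), smul_eq_mul]
  ring

lemma pairing_single_of_one (hone : B (single 1 1) (single 1 1) = 1)
    (hright : ∀ x y' y'' : FF I, B x (mulF y' y'') = B2 C B (rF C x) (tens y' y'')) (k : I) :
    B (single (of k) 1) (single 1 1) = 0 := by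
  -- The coproduct of `θ_k` is `θ_k ⊗ 1 + 1 ⊗ θ_k`, so `B(θ_k, 1) = 2 B(θ_k, 1)`.
  have h := pairing_single_mul_right C B hright (of k) 1 1
  rw [mul_one, show (of k).toList = [k] from rfl, linearCombination_rW_cons] at h
  simp only [rW, Finsupp.linearCombination_single, smul_eq_mul, mul_one, one_mul, wt_of, wt_one,
    pairF_zero_left, pairF_zero_right, mul_zero, zpow_zero, tw_zero_left, hone] at h
  linear_combination -h

lemma pairing_one_right (hsym : ∀ x y : FF I, B x y = B y x)
    (hone : B (single 1 1) (single 1 1) = 1)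
    (hright : ∀ x y' y'' : FF I, B x (mulF y' y'') = B2 C B (rF C x) (tens y' y''))
    (x : FF I) : B x (single 1 1) = x 1 := by
  suffices B.flip (single 1 1) = Finsupp.lapply 1 from LinearMap.congr_fun this x
  ext u
  simp only [LinearMap.comp_apply, Finsupp.lsingle_apply, LinearMap.flip_apply,
    Finsupp.lapply_apply]
  cases u using FreeMonoid.casesOn with
  | one => rw [hone, Finsupp.single_eq_same]
  | of_mul m w =>
    rw [hsym, pairing_single_mul_right C B hright, Finsupp.single_eq_of_ne (of_mul_ne_one m w).symm]
    simp [rW, hsym (single 1 1), pairing_single_of_one C B hone hright m]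

lemma pairing_single_of_right (hsym : ∀ x y : FF I, B x y = B y x)
    (hone : B (single 1 1) (single 1 1) = 1)
    (hθθ : ∀ i j : I, B (θ i) (θ j) = if i = j then (1 - v ^ (-(2 * C i i)))⁻¹ else 0)
    (hright : ∀ x y' y'' : FF I, B x (mulF y' y'') = B2 C B (rF C x) (tens y' y''))
    (x : FF I) (k : I) : B x (single (of k) 1) = (1 - v ^ (-(2 * C k k)))⁻¹ * x (of k) := by
  suffices B.flip (single (of k) 1) = (1 - v ^ (-(2 * C k k)))⁻¹ • Finsupp.lapply (of k) from
    LinearMap.congr_fun this x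
  ext u
  simp only [LinearMap.comp_apply, Finsupp.lsingle_apply, LinearMap.flip_apply,
    LinearMap.smul_apply, Finsupp.lapply_apply, smul_eq_mul]
  rw [hsym]
  cases u using FreeMonoid.casesOn with
  | one =>
    rw [pairing_single_of_one C B hone hright, Finsupp.single_eq_of_ne (FreeMonoid.of_ne_one k),
      mul_zero]
  | of_mul m w =>
    have hw := pairing_one_right C B hsym hone hright (single w 1)
    rw [pairing_single_mul_right C B hright, show (of k).toList = [k] from rfl,
      linearCombination_rW_cons]
    simp only [rW, Finsupp.linearCombination_single, smul_eq_mul, one_mul, mul_one, wt_one, wt_of,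
      pairF_zero_left, pairF_zero_right, tw_zero_left, mul_zero, zpow_zero, hsym (single 1 1),
      pairing_single_of_one C B hone hright m, zero_mul, add_zero, hw]
    rw [show B (single (of k) 1) (single (of m) 1) = B (θ k) (θ m) from rfl, hθθ]
    classical
    simp only [Finsupp.single_apply, of_mul_eq_of_iff]
    by_cases hkm : k = m <;> by_cases hw1 : w = 1 <;> simp [hkm, hw1, eq_comm]

lemma pairing_single_of_mul_right (hsym : ∀ x y : FF I, B x y = B y x)
    (hone : B (single 1 1) (single 1 1) = 1)
    (hθθ : ∀ i j : I, B (θ i) (θ j) = if i = j then (1 - v ^ (-(2 * C i i)))⁻¹ else 0)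
    (hright : ∀ x y' y'' : FF I, B x (mulF y' y'') = B2 C B (rF C x) (tens y' y''))
    (x : FF I) (k : I) (w : FreeMonoid I) :
    B x (single (of k * w) 1) = (1 - v ^ (-(2 * C k k)))⁻¹ * linearCombination QVT
      (fun u => t ^ (2 * pairF (Dmat C) (single k 1) (wt u)) * B (single u 1) (single w 1))
      (skewDeriv C k x) := by
  suffices B.flip (single (of k * w) 1) = (1 - v ^ (-(2 * C k k)))⁻¹ • (linearCombination QVT
      (fun u => t ^ (2 * pairF (Dmat C) (single k 1) (wt u)) * B (single u 1) (single w 1))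
      ∘ₗ skewDeriv C k) from LinearMap.congr_fun this x
  ext u
  simp only [LinearMap.comp_apply, Finsupp.lsingle_apply, LinearMap.flip_apply,
    LinearMap.smul_apply, smul_eq_mul, skewDeriv, Finsupp.linearCombination_single, one_smul]
  rw [pairing_single_mul_right C B hright, ← linearCombination_const_mul,
    ← linearCombination_rW_fst_of]
  congr 2
  funext q
  rw [pairing_single_of_right C B hsym hone hθθ hright]
  by_cases hq : q.1 = of k
  · rw [hq, wt_of]
    ring
  · simp [Finsupp.single_eq_of_ne (Ne.symm hq)]

end Pairing

theorem serre_relation_general (C : I → I → ℤ)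
    (hdiag : ∀ i, 0 < C i i)
    (B : FF I →ₗ[QVT] FF I →ₗ[QVT] QVT)
    (hsym : ∀ x y : FF I, B x y = B y x)
    (hone : B (Finsupp.single 1 1) (Finsupp.single 1 1) = 1)
    (hθθ : ∀ i j : I, B (θ i) (θ j) =
      if i = j then (1 - v ^ (-(2 * C i i)))⁻¹ else 0)
    (hright : ∀ x y' y'' : FF I, B x (mulF y' y'') = B2 C B (rF C x) (tens y' y''))
    (i j : I) (hij : i ≠ j) (N : ℕ) (hN : C i j + C j i = -(N : ℤ) * C i i) :
    ∀ y : FF I, B (serre C i j N) y = 0 := by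
  suffices h : B (serre C i j N) = 0 from fun y => by rw [h, LinearMap.zero_apply]
  ext w
  simp only [LinearMap.comp_apply, Finsupp.lsingle_apply, LinearMap.zero_comp,
    LinearMap.zero_apply]
  cases w using FreeMonoid.casesOn with
  | one => rw [pairing_one_right C B hsym hone hright, serre_apply_one]
  | of_mul k w =>
    rw [pairing_single_of_mul_right C B hsym hone hθθ hright,
      skewDeriv_serre C (hdiag i).ne' hij hN, map_zero, mul_zero]

theorem serre_relation (C : I → I → ℤ)
    (hdiag : ∀ i, 0 < C i i) (hoff : ∀ i j, i ≠ j → C i j ≤ 0)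
    (B : FF I →ₗ[QVT] FF I →ₗ[QVT] QVT)
    (hsym : ∀ x y : FF I, B x y = B y x)
    (hone : B (Finsupp.single 1 1) (Finsupp.single 1 1) = 1)
    (hθθ : ∀ i j : I, B (θ i) (θ j) =
      if i = j then (1 - v ^ (-(2 * C i i)))⁻¹ else 0)
    (hright : ∀ x y' y'' : FF I, B x (mulF y' y'') = B2 C B (rF C x) (tens y' y''))
    (hleft : ∀ x' x'' y : FF I, B (mulF x' x'') y = B2 C B (tens x' x'') (rF C y))
    (i j : I) (hij : i ≠ j) (N : ℕ) (hN : C i j + C j i = -(N : ℤ) * C i i) :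
    ∀ y : FF I, B (serre C i j N) y = 0 :=
  serre_relation_general C hdiag B hsym hone hθθ hright i j hij N hN

end
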